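/- In any generalized grid graph with rows [0..N], suppose i+1 ≤ N, the vertices (i,d−1) and (i,d) are reachable, (i,d) is dominated by (i,d−1) (i.e. c(i,d−1) = c(i,d) − 1), and w(i+1,d−1) = 0 (diagonal d−1 has a match at row i+1). Then c(i+1,d) = c(i,d); moreover there exists a minimum-weight directed path from (0,0) to (i+1,d) that does not pass through the vertex (i,d), and (i+1,d) is dominated by (i+1,d−1). -/

import Mathlib

/-!
The walk `(i,d-1) → (i+1,d-1) → (i+1,d)` has weight `0 + 1`, so
`c(i+1,d) ≤ c(i,d-1) + 1 = c(i,d)`; appended to a shortest path to `(i,d-1)` it never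
visits `(i,d)`, since every edge increases `(i,d)` lexicographically. The reverse inequality is
row monotonicity `c(i,d) ≤ c(i+1,d)`, proved simultaneously with `c(i,d) ≤ c(i,d+1) + 1` by
induction along the last edge of a shortest path. The only case not reduced to the induction
hypothesis is the boundary `i + d = 0`: there `c(j,-j) = j`, while any path to diagonal `d`
costs at least `-d`, since only deletions lower the diagonal.
-/

namespace Stmt5

/-- Total weight of a list of vertices regarded as a walk. -/
def pathCost {V : Type*} (wt : V → V → ℕ) : List V → ℕ
  | [] => 0
  | [_] => 0
  | a :: b :: l => wt a b + pathCost wt (b :: l)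

/-- `l` is a directed path (walk) from `s` to `v` in the graph with edge relation `E`. -/
def IsPath {V : Type*} (E : V → V → Prop) (s v : V) (l : List V) : Prop :=
  l.head? = some s ∧ l.getLast? = some v ∧ l.Chain' E

/-- Shortest-path cost from `s` to `v`. -/
noncomputable def cost {V : Type*} (E : V → V → Prop) (wt : V → V → ℕ) (s v : V) : ℕ :=
  sInf { c | ∃ l : List V, IsPath E s v l ∧ pathCost wt l = c }

/-- Vertices of a generalized grid graph with rows `[0..N]` and diagonals `[-t..t]`. -/
def ggVertex (N t : ℕ) (v : ℤ × ℤ) : Prop :=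
  0 ≤ v.1 ∧ v.1 ≤ (N : ℤ) ∧ -(t : ℤ) ≤ v.2 ∧ v.2 ≤ (t : ℤ)

/-- Edges of a generalized grid graph: deletion edges `(i,d) → (i+1,d-1)`,
insertion edges `(i,d) → (i,d+1)`, vertical edges `(i,d) → (i+1,d)`;
present only when both endpoints are vertices. -/
def ggEdge (N t : ℕ) (u v : ℤ × ℤ) : Prop :=
  ggVertex N t u ∧ ggVertex N t v ∧
    (v = (u.1 + 1, u.2 - 1) ∨ v = (u.1, u.2 + 1) ∨ v = (u.1 + 1, u.2))

/-- Weights: a vertical edge `(i,d) → (i+1,d)` has weight `w (i+1) d`;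
deletion and insertion edges have weight `1`. -/
def ggWt (w : ℤ → ℤ → ℕ) (u v : ℤ × ℤ) : ℕ :=
  if v = (u.1 + 1, u.2) then w v.1 v.2 else 1

/-- A vertex `(i,d)` is reachable if `i + d ≥ 0`. -/
def Reachable (N t : ℕ) (v : ℤ × ℤ) : Prop := ggVertex N t v ∧ 0 ≤ v.1 + v.2

/-- Shortest-path cost `c(i,d)` from `(0,0)` in the generalized grid graph. -/
noncomputable def ggCost (N t : ℕ) (w : ℤ → ℤ → ℕ) (v : ℤ × ℤ) : ℕ :=
  cost (ggEdge N t) (ggWt w) (0, 0) v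

/-- `(i,d)` is dominated by `(i,d-1)`. -/
def DomL (N t : ℕ) (w : ℤ → ℤ → ℕ) (v : ℤ × ℤ) : Prop :=
  Reachable N t v ∧ Reachable N t (v.1, v.2 - 1) ∧
    ggCost N t w (v.1, v.2 - 1) + 1 = ggCost N t w v

/-- `(i,d)` is dominated by `(i-1,d+1)`. -/
def DomU (N t : ℕ) (w : ℤ → ℤ → ℕ) (v : ℤ × ℤ) : Prop :=
  Reachable N t v ∧ Reachable N t (v.1 - 1, v.2 + 1) ∧
    ggCost N t w (v.1 - 1, v.2 + 1) + 1 = ggCost N t w v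

/-- Potency, defined by (well-founded, hence unambiguous) recursion in
lexicographic order: `(i,d)` is potent iff (dominated by `(i,d-1)` implies
`(i,d-1)` potent and `w (i+1) (d-1) = 1`) and (dominated by `(i-1,d+1)` implies
`(i-1,d+1)` potent and `w i (d+1) = 1`). -/
inductive Potent (N t : ℕ) (w : ℤ → ℤ → ℕ) : ℤ × ℤ → Prop where
  | mk : ∀ v : ℤ × ℤ,
      (DomL N t w v → Potent N t w (v.1, v.2 - 1)) →
      (DomL N t w v → w (v.1 + 1) (v.2 - 1) = 1) →
      (DomU N t w v → Potent N t w (v.1 - 1, v.2 + 1)) →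
      (DomU N t w v → w v.1 (v.2 + 1) = 1) →
      Potent N t w v

section Paths

variable {V : Type*} {E : V → V → Prop} {wt : V → V → ℕ} {s u v : V} {l : List V}

theorem pathCost_append_pair (wt : V → V → ℕ) (l : List V) (a b : V) :
    pathCost wt (l ++ [a, b]) = pathCost wt (l ++ [a]) + wt a b := by
  induction l with
  | nil => simp [pathCost]
  | cons c l ih =>
    cases l with
    | nil => simp [pathCost]
    | cons e l =>
      simp only [List.cons_append, pathCost] at ih ⊢
      omega

theorem pathCost_append_singleton (h : l.getLast? = some u) :
    pathCost wt (l ++ [v]) = pathCost wt l + wt u v := by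
  obtain ⟨m, rfl⟩ := List.getLast?_eq_some_iff.mp h
  rw [List.append_assoc, List.singleton_append, pathCost_append_pair]

theorem isPath_singleton (s : V) : IsPath E s s [s] :=
  ⟨rfl, rfl, List.isChain_singleton s⟩

theorem IsPath.append_singleton (hl : IsPath E s u l) (he : E u v) :
    IsPath E s v (l ++ [v]) := by
  obtain ⟨hs, hu, hc⟩ := hl
  have hne : l ≠ [] := by rintro rfl; simp at hs
  refine ⟨by simp [List.head?_append, hs], by simp, ?_⟩
  exact List.isChain_append.mpr ⟨hc, List.isChain_singleton v, by simpa [hu] using he⟩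

theorem IsPath.exists_eq_append_singleton (hl : IsPath E s v l) (hv : v ≠ s) :
    ∃ m u, l = m ++ [v] ∧ IsPath E s u m ∧ E u v := by
  obtain ⟨hs, hlast, hc⟩ := hl
  obtain ⟨m, rfl⟩ := List.getLast?_eq_some_iff.mp hlast
  obtain ⟨m, u, rfl⟩ : ∃ m' u, m = m' ++ [u] := by
    rcases m.eq_nil_or_concat with rfl | h
    · exact absurd (by simpa using hs) hv
    · simpa using h
  obtain ⟨hcm, -, he⟩ := List.isChain_append.mp hc
  refine ⟨m ++ [u], u, rfl, ⟨?_, by simp, hcm⟩, by simpa using he⟩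
  rw [List.head?_append] at hs
  cases m <;> simpa using hs

theorem IsPath.le_of_mem {α : Type*} [Preorder α] {f : V → α}
    (hf : ∀ a b, E a b → f a ≤ f b) (hl : IsPath E s v l) {x : V} (hx : x ∈ l) :
    f x ≤ f v := by
  refine hl.2.2.backwards_induction (f · ≤ f v) l (fun a b hab hb => (hf a b hab).trans hb)
    (fun hne => ?_) x hx
  rw [Option.some.inj ((List.getLast?_eq_some_getLast hne).symm.trans hl.2.1)]

theorem IsPath.notMem_of_lt {α : Type*} [Preorder α] {f : V → α}
    (hf : ∀ a b, E a b → f a ≤ f b) (hl : IsPath E s v l) {x : V} (hx : f v < f x) :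
    x ∉ l :=
  fun h => (hl.le_of_mem hf h).not_gt hx

theorem cost_le_pathCost (hl : IsPath E s v l) : cost E wt s v ≤ pathCost wt l :=
  Nat.sInf_le ⟨l, hl, rfl⟩

theorem IsPath.exists_pathCost_eq_cost (hl : IsPath E s v l) :
    ∃ l', IsPath E s v l' ∧ pathCost wt l' = cost E wt s v :=
  Nat.sInf_mem (s := {c | ∃ l, IsPath E s v l ∧ pathCost wt l = c}) ⟨_, l, hl, rfl⟩

theorem cost_le_cost_add (hl : IsPath E s u l) (he : E u v) :
    cost E wt s v ≤ cost E wt s u + wt u v := by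
  obtain ⟨l', hl', hc⟩ := hl.exists_pathCost_eq_cost (wt := wt)
  calc cost E wt s v ≤ pathCost wt (l' ++ [v]) := cost_le_pathCost (hl'.append_singleton he)
    _ = cost E wt s u + wt u v := by rw [pathCost_append_singleton hl'.2.1, hc]

theorem IsPath.exists_cost_eq_cost_add (hl : IsPath E s v l) (hv : v ≠ s) :
    ∃ u, (∃ m, IsPath E s u m) ∧ E u v ∧ cost E wt s v = cost E wt s u + wt u v := by
  obtain ⟨l', hl', hc⟩ := hl.exists_pathCost_eq_cost (wt := wt)
  obtain ⟨m, u, rfl, hm, he⟩ := hl'.exists_eq_append_singleton hv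
  refine ⟨u, ⟨m, hm⟩, he, le_antisymm (cost_le_cost_add hm he) ?_⟩
  rw [← hc, pathCost_append_singleton hm.2.1]
  exact Nat.add_le_add_right (cost_le_pathCost hm) _

end Paths

section GridGraph

variable {N t : ℕ} {w : ℤ → ℤ → ℕ} {u v : ℤ × ℤ}

theorem ggWt_of_snd_ne (h : v.2 ≠ u.2) : ggWt w u v = 1 :=
  if_neg fun huv => h (by simp [huv])

theorem ggWt_vertical (i d : ℤ) : ggWt w (i, d) (i + 1, d) = w (i + 1) d :=
  if_pos rfl

theorem ggEdge_deletion {i d : ℤ} (hu : ggVertex N t (i, d)) (hv : ggVertex N t (i + 1, d - 1)) :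
    ggEdge N t (i, d) (i + 1, d - 1) :=
  ⟨hu, hv, Or.inl rfl⟩

theorem ggEdge_insertion {i d : ℤ} (hu : ggVertex N t (i, d)) (hv : ggVertex N t (i, d + 1)) :
    ggEdge N t (i, d) (i, d + 1) :=
  ⟨hu, hv, Or.inr (Or.inl rfl)⟩

theorem ggEdge_vertical {i d : ℤ} (hu : ggVertex N t (i, d)) (hv : ggVertex N t (i + 1, d)) :
    ggEdge N t (i, d) (i + 1, d) :=
  ⟨hu, hv, Or.inr (Or.inr rfl)⟩

theorem ggEdge.potential_lt (he : ggEdge N t u v) : 2 * u.1 + u.2 < 2 * v.1 + v.2 := by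
  rcases he.2.2 with rfl | rfl | rfl <;> dsimp only <;> omega

theorem ggEdge.fst_add_snd_le (he : ggEdge N t u v) : u.1 + u.2 ≤ v.1 + v.2 := by
  rcases he.2.2 with rfl | rfl | rfl <;> dsimp only <;> omega

theorem ggEdge.toLex_lt (he : ggEdge N t u v) : toLex u < toLex v := by
  rcases he.2.2 with rfl | rfl | rfl <;> simp [Prod.Lex.toLex_lt_toLex]

theorem Reachable.of_isPath {l : List (ℤ × ℤ)} (hl : IsPath (ggEdge N t) (0, 0) v l)
    (hv : ggVertex N t v) : Reachable N t v := by
  refine ⟨hv, ?_⟩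
  obtain ⟨l, rfl⟩ := List.head?_eq_some_iff.mp hl.1
  simpa using hl.le_of_mem (f := fun u => u.1 + u.2) (fun _ _ he => he.fst_add_snd_le)
    List.mem_cons_self

theorem reachable_induction {P : ℤ × ℤ → Prop}
    (h : ∀ v, Reachable N t v →
      (∀ u, Reachable N t u → 2 * u.1 + u.2 < 2 * v.1 + v.2 → P u) → P v) :
    ∀ v, Reachable N t v → P v := by
  intro v
  induction hn : (2 * v.1 + v.2).toNat using Nat.strong_induction_on generalizing v with
  | _ n ih =>
    intro hv
    refine h v hv fun u hu hlt => ih _ ?_ u rfl hu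
    obtain ⟨⟨hv₁, -, -, -⟩, hv₂⟩ := hv
    obtain ⟨⟨hu₁, -, -, -⟩, hu₂⟩ := hu
    omega

theorem Reachable.exists_ggEdge (hv : Reachable N t v) (h0 : v ≠ (0, 0)) :
    ∃ u, Reachable N t u ∧ ggEdge N t u v := by
  obtain ⟨i, d⟩ := v
  simp only [Reachable, ggVertex, ggEdge, ne_eq, Prod.mk.injEq, Prod.exists] at *
  by_cases hd : 0 < d
  · exact ⟨i, d - 1, by omega⟩
  by_cases hs : i + d = 0
  · exact ⟨i - 1, d + 1, by omega⟩
  · exact ⟨i - 1, d, by omega⟩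

theorem Reachable.exists_isPath (hv : Reachable N t v) :
    ∃ l, IsPath (ggEdge N t) (0, 0) v l := by
  refine reachable_induction (P := fun v => ∃ l, IsPath (ggEdge N t) (0, 0) v l)
    (fun v hv ih => ?_) v hv
  by_cases h0 : v = (0, 0)
  · subst h0
    exact ⟨_, isPath_singleton _⟩
  obtain ⟨u, hu, he⟩ := hv.exists_ggEdge h0
  obtain ⟨l, hl⟩ := ih u hu he.potential_lt
  exact ⟨_, hl.append_singleton he⟩

theorem ggCost_le_add (hu : Reachable N t u) (he : ggEdge N t u v) :
    ggCost N t w v ≤ ggCost N t w u + ggWt w u v :=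
  let ⟨_, hl⟩ := hu.exists_isPath
  cost_le_cost_add hl he

theorem ggCost_zero : ggCost N t w (0, 0) = 0 :=
  Nat.le_zero.mp (cost_le_pathCost (isPath_singleton (0, 0)))

theorem ggCost_induction {P : ℤ × ℤ → Prop} (h0 : P (0, 0))
    (hstep : ∀ u v, Reachable N t u → Reachable N t v → ggEdge N t u v →
      ggCost N t w v = ggCost N t w u + ggWt w u v → P u → P v) :
    ∀ v, Reachable N t v → P v := by
  refine reachable_induction fun v hv ih => ?_
  by_cases hv0 : v = (0, 0)
  · exact hv0 ▸ h0
  obtain ⟨_, hl⟩ := hv.exists_isPath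
  obtain ⟨u, ⟨m, hm⟩, he, hc⟩ := hl.exists_cost_eq_cost_add (wt := ggWt w) hv0
  have hu : Reachable N t u := .of_isPath hm he.1
  exact hstep u v hu hv he hc (ih u hu he.potential_lt)

theorem neg_snd_le_ggCost (hv : Reachable N t v) : -v.2 ≤ (ggCost N t w v : ℤ) := by
  refine ggCost_induction (w := w) (P := fun v => -v.2 ≤ (ggCost N t w v : ℤ)) (by simp)
    (fun u v _ _ he hc hu => ?_) v hv
  rcases he.2.2 with rfl | rfl | rfl
  · rw [hc, ggWt_of_snd_ne (by simp)]; push_cast; omega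
  · rw [hc, ggWt_of_snd_ne (by simp)]; push_cast; omega
  · rw [hc]; push_cast; omega

theorem ggCost_antidiag_le {j : ℤ} (hj0 : 0 ≤ j) (hjN : j ≤ N) (hjt : j ≤ t) :
    (ggCost N t w (j, -j) : ℤ) ≤ j := by
  induction j, hj0 using Int.leInduction with
  | base => simp [ggCost_zero]
  | succ j hj ih =>
    have hr : Reachable N t (j, -j) := by simp only [Reachable, ggVertex]; omega
    have hrel := ggCost_le_add (w := w) hr (ggEdge_deletion hr.1 (by simp only [ggVertex]; omega))
    rw [ggWt_of_snd_ne (by simp)] at hrel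
    have hj := ih (by omega) (by omega)
    rw [neg_add']
    omega

theorem ggCost_antidiag_le_ggCost {i d : ℤ} (hv : Reachable N t (i, d))
    (hd : ggVertex N t (-d, d)) : ggCost N t w (-d, d) ≤ ggCost N t w (i, d) := by
  have hup := ggCost_antidiag_le (N := N) (t := t) (w := w) (j := -d) hd.1 hd.2.1
    (by simp only [ggVertex] at hd; omega)
  have hlow := neg_snd_le_ggCost (w := w) hv
  rw [neg_neg] at hup
  omega

theorem ggCost_pred_fst_le_and_pred_snd_le (hv : Reachable N t v) :
    (Reachable N t (v.1 - 1, v.2) → ggCost N t w (v.1 - 1, v.2) ≤ ggCost N t w v) ∧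
    (Reachable N t (v.1, v.2 - 1) → ggCost N t w (v.1, v.2 - 1) ≤ ggCost N t w v + 1) := by
  refine ggCost_induction (w := w)
    (P := fun v =>
      (Reachable N t (v.1 - 1, v.2) → ggCost N t w (v.1 - 1, v.2) ≤ ggCost N t w v) ∧
      (Reachable N t (v.1, v.2 - 1) → ggCost N t w (v.1, v.2 - 1) ≤ ggCost N t w v + 1))
    ?_ ?_ v hv
  · constructor <;> intro h <;> simp only [Reachable, ggVertex] at h <;> omega
  rintro ⟨i, d⟩ v hu hv he hc ⟨ihM, ihS⟩
  rcases he.2.2 with rfl | rfl | rfl <;> dsimp only at ihM ihS hc hv ⊢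
  · rw [hc, ggWt_of_snd_ne (by simp), add_sub_cancel_right]
    refine ⟨ihS, fun h => ?_⟩
    have hr : Reachable N t (i, d - 1) := by simp only [Reachable, ggVertex] at *; omega
    have hrel := ggCost_le_add (w := w) hr
      (ggEdge_deletion hr.1 (by simp only [Reachable, ggVertex] at h ⊢; omega))
    rw [ggWt_of_snd_ne (by simp)] at hrel
    have := ihS hr
    omega
  · rw [add_sub_cancel_right]
    refine ⟨fun h => ?_, fun _ => by rw [hc]; omega⟩
    by_cases hr : Reachable N t (i - 1, d)
    · have hrel := ggCost_le_add (w := w) hr (ggEdge_insertion hr.1 h.1)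
      rw [ggWt_of_snd_ne (by simp)] at hc
      rw [ggWt_of_snd_ne (by simp)] at hrel
      have := ihM hr
      omega
    · have hi : i - 1 = -(d + 1) := by simp only [Reachable, ggVertex] at *; omega
      rw [hi]
      exact ggCost_antidiag_le_ggCost hv (by rw [← hi]; exact h.1)
  · rw [hc, ggWt_vertical, add_sub_cancel_right]
    refine ⟨fun _ => Nat.le_add_right _ _, fun h => ?_⟩
    have hrel := ggCost_le_add (w := w) hu (ggEdge_deletion hu.1 h.1)
    rw [ggWt_of_snd_ne (by simp)] at hrel
    omega

theorem ggCost_le_ggCost_succ_fst {i d : ℤ} (h : Reachable N t (i, d)) (hi : i + 1 ≤ N) :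
    ggCost N t w (i, d) ≤ ggCost N t w (i + 1, d) := by
  have hv : Reachable N t (i + 1, d) := by simp only [Reachable, ggVertex] at h ⊢; omega
  simpa using (ggCost_pred_fst_le_and_pred_snd_le (w := w) hv).1 (by simpa using h)

theorem ggCost_succ_fst_eq_of_eq_zero {i d : ℤ} (h : Reachable N t (i, d)) (hi : i + 1 ≤ N)
    (hw : w (i + 1) d = 0) : ggCost N t w (i + 1, d) = ggCost N t w (i, d) := by
  have hv : Reachable N t (i + 1, d) := by simp only [Reachable, ggVertex] at h ⊢; omega
  have hrel := ggCost_le_add (w := w) h (ggEdge_vertical h.1 hv.1)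
  rw [ggWt_vertical, hw, add_zero] at hrel
  exact hrel.antisymm (ggCost_le_ggCost_succ_fst h hi)

end GridGraph

theorem stmt5_general (N t : ℕ) (w : ℤ → ℤ → ℕ)
    (i d : ℤ) (hiN : i + 1 ≤ (N : ℤ))
    (h1 : Reachable N t (i, d - 1)) (h2 : Reachable N t (i, d))
    (hdom : ggCost N t w (i, d - 1) + 1 = ggCost N t w (i, d))
    (hmatch : w (i + 1) (d - 1) = 0) :
    ggCost N t w (i + 1, d) = ggCost N t w (i, d) ∧
    (∃ l : List (ℤ × ℤ), IsPath (ggEdge N t) (0, 0) (i + 1, d) l ∧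
      pathCost (ggWt w) l = ggCost N t w (i + 1, d) ∧ (i, d) ∉ l) ∧
    DomL N t w (i + 1, d) := by
  have hA : Reachable N t (i + 1, d - 1) := by simp only [Reachable, ggVertex] at *; omega
  have hB : Reachable N t (i + 1, d) := by simp only [Reachable, ggVertex] at *; omega
  have eA : ggEdge N t (i, d - 1) (i + 1, d - 1) := ggEdge_vertical h1.1 hA.1
  have eB : ggEdge N t (i + 1, d - 1) (i + 1, d) := by
    simpa using ggEdge_insertion hA.1 (by simpa using hB.1)
  have hwB : ggWt w (i + 1, d - 1) (i + 1, d) = 1 := ggWt_of_snd_ne (by dsimp only; omega)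
  have hcA := ggCost_succ_fst_eq_of_eq_zero h1 hiN hmatch
  have hcB : ggCost N t w (i + 1, d) = ggCost N t w (i, d) := by
    refine le_antisymm ?_ (ggCost_le_ggCost_succ_fst h2 hiN)
    simpa only [hwB, hcA, hdom] using ggCost_le_add (w := w) hA eB
  obtain ⟨_, hL₀⟩ := h1.exists_isPath
  obtain ⟨L, hL, hLc⟩ := hL₀.exists_pathCost_eq_cost (wt := ggWt w)
  refine ⟨hcB, ⟨L ++ [(i + 1, d - 1)] ++ [(i + 1, d)],
    (hL.append_singleton eA).append_singleton eB, ?_, ?_⟩, hB, hA, by dsimp only; omega⟩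
  · rw [pathCost_append_singleton (u := (i + 1, d - 1)) (by simp),
      pathCost_append_singleton hL.2.1, hLc, ggWt_vertical, hmatch, hwB, hcB, ← hdom]
    rfl
  · have hL' := hL.notMem_of_lt (f := toLex) (fun _ _ he => he.toLex_lt.le)
      (x := (i, d)) (by simp [Prod.Lex.toLex_lt_toLex])
    simp only [List.mem_append, List.mem_singleton, not_or, Prod.mk.injEq]
    exact ⟨⟨hL', by omega⟩, by omega⟩

theorem stmt5 (N t : ℕ) (w : ℤ → ℤ → ℕ)
    (hw1 : ∀ i d, w i d ≤ 1)
    (hw0 : ∀ i d : ℤ, ¬(1 ≤ i ∧ i ≤ (N : ℤ) ∧ -(t : ℤ) ≤ d ∧ d ≤ (t : ℤ)) → w i d = 0)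
    (i d : ℤ) (hiN : i + 1 ≤ (N : ℤ))
    (h1 : Reachable N t (i, d - 1)) (h2 : Reachable N t (i, d))
    (hdom : ggCost N t w (i, d - 1) + 1 = ggCost N t w (i, d))
    (hmatch : w (i + 1) (d - 1) = 0) :
    ggCost N t w (i + 1, d) = ggCost N t w (i, d) ∧
    (∃ l : List (ℤ × ℤ), IsPath (ggEdge N t) (0, 0) (i + 1, d) l ∧
      pathCost (ggWt w) l = ggCost N t w (i + 1, d) ∧ (i, d) ∉ l) ∧
    DomL N t w (i + 1, d) :=
  stmt5_general N t w i d hiN h1 h2 hdom hmatch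

end Stmt5
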